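/- Suppose for each i = 1, …, N an independent random subgraph Z_i of G satisfies: for every set F of at most k−1 edges and every terminal t ∈ T, Pr[Z_i \ F contains an r→t path] ≥ q. If N ≥ (2k ln n)/q where n ≥ max(|E(G)|², |T|) (meaning |E(G)|^{k−1}·|T| ≤ n^{2k−1}), then with probability at least 1 − n^{−1}, the union H = ∪_i Z_i contains, for every terminal t and every set F of k−1 edges, an r→t path avoiding F; hence H has k edge-disjoint r→t paths for every t ∈ T. -/

import Mathlib

open scoped Classical

/-- The list of directed edges traversed by a list of vertices. -/
def pathEdges {V : Type*} (p : List V) : List (V × V) := p.zip p.tail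

/-- `p` is a simple directed path in the edge set `E` starting at `s`. -/
def IsRPath {V : Type*} (E : Finset (V × V)) (s : V) (p : List V) : Prop :=
  p.Nodup ∧ p.Chain' (fun u v => (u, v) ∈ E) ∧ p.head? = some s

/-- `p` is a simple directed path in `E` from `s` to `t`. -/
def IsRPathTo {V : Type*} (E : Finset (V × V)) (s t : V) (p : List V) : Prop :=
  IsRPath E s p ∧ p.getLast? = some t

/-- `E` contains `k` pairwise edge-disjoint directed `s`→`t` paths. -/
def HasKPaths {V : Type*} (E : Finset (V × V)) (s t : V) (k : ℕ) : Prop :=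
  ∃ P : Fin k → List V, (∀ i, IsRPathTo E s t (P i)) ∧
    ∀ i j, i ≠ j → ∀ e, e ∈ pathEdges (P i) → e ∉ pathEdges (P j)

/-- In-degree of a vertex `v` in the edge set `E`. -/
def inDeg {V : Type*} [DecidableEq V] (E : Finset (V × V)) (v : V) : ℕ :=
  (E.filter (fun e => e.2 = v)).card

/-- In-degree of a vertex set `S`: number of edges entering `S` from outside. -/
def inDegS {V : Type*} [DecidableEq V] (E : Finset (V × V)) (S : Finset V) : ℕ :=
  (E.filter (fun e => e.1 ∉ S ∧ e.2 ∈ S)).card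

/-- The maximum number of pairwise edge-disjoint `s→v` paths in `E`. -/
noncomputable def maxConn {V : Type*} (E : Finset (V × V)) (s v : V) : ℕ :=
  sSup {m : ℕ | HasKPaths E s v m}

open MeasureTheory

/-!
For a fixed terminal `t` and a fixed set `F` of `k - 1` edges, each of the `N` independent
samples contains an `r → t` path avoiding `F` with probability at least `q`, so their union misses
one with probability at most `(1 - q)^N ≤ e^{-qN} ≤ n^{-2k}`. A union bound over the at most
`|E|^(k-1) |T| ≤ n^(2k-1)` pairs `(F, t)` bounds the failure probability by `1/n`. Outside the
failure event no `k - 1` edges separate `r` from a terminal, and Menger's theorem yields `k`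
edge-disjoint paths.

Menger's theorem is proved with 0/1 flows: a flow of value `k` is augmented along a path of the
residual graph; if there is none, the edges leaving the residual-reachable set form a cut of size
`k`. A flow of value `k` decomposes into `k` edge-disjoint paths, because the edges leaving the set
reachable from `r` inside the flow carry its whole value, so `t` is reachable.
-/

section Paths

variable {V : Type*}

@[simp] lemma pathEdges_singleton (a : V) : pathEdges [a] = [] := rfl

@[simp] lemma pathEdges_cons_cons (a b : V) (l : List V) :
    pathEdges (a :: b :: l) = (a, b) :: pathEdges (b :: l) := rfl

lemma map_fst_pathEdges : ∀ l : List V, (pathEdges l).map Prod.fst = l.dropLast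
  | [] | [_] => rfl
  | a :: b :: l => by simp [map_fst_pathEdges (b :: l)]

lemma pathEdges_nodup {l : List V} (h : l.Nodup) : (pathEdges l).Nodup :=
  .of_map Prod.fst <| map_fst_pathEdges l ▸ h.sublist l.dropLast_sublist

lemma rel_of_mem_pathEdges {R : V → V → Prop} :
    ∀ {l : List V}, l.IsChain R → ∀ e ∈ pathEdges l, R e.1 e.2
  | a :: b :: l, h, e, he => by
    rw [List.isChain_cons_cons] at h
    rcases List.mem_cons.1 he with rfl | he
    exacts [h.1, rel_of_mem_pathEdges h.2 e he]

lemma sum_map_pathEdges_sub {G : Type*} [AddCommGroup G] (g : V → G) :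
    ∀ {l : List V} {s t : V}, l.head? = some s → l.getLast? = some t →
      ((pathEdges l).map fun e => g e.1 - g e.2).sum = g s - g t
  | [a], s, t, hs, ht => by simp_all
  | a :: b :: l, s, t, hs, ht => by
    simp only [List.head?_cons, Option.some_inj] at hs
    rw [List.getLast?_cons_cons] at ht
    simp [sum_map_pathEdges_sub g (l := b :: l) rfl ht, hs]

lemma IsRPathTo.mono {E E' : Finset (V × V)} {s t : V} {p : List V} (hE : E ⊆ E')
    (h : IsRPathTo E s t p) : IsRPathTo E' s t p :=
  ⟨⟨h.1.1, h.1.2.1.imp fun _ _ he => hE he, h.1.2.2⟩, h.2⟩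

lemma IsRPathTo.pathEdges_subset [DecidableEq V] {E : Finset (V × V)} {s t : V} {p : List V}
    (h : IsRPathTo E s t p) : (pathEdges p).toFinset ⊆ E := fun e he =>
  rel_of_mem_pathEdges (R := fun u v => (u, v) ∈ E) h.1.2.1 e (List.mem_toFinset.1 he)

lemma reflTransGen_of_isChain {R : V → V → Prop} :
    ∀ {l : List V} {s t : V}, l.IsChain R → l.head? = some s → l.getLast? = some t →
      Relation.ReflTransGen R s t
  | [a], s, t, _, hs, ht => by simp_all [Relation.ReflTransGen.refl]
  | a :: b :: l, s, t, h, hs, ht => by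
    simp only [List.head?_cons, Option.some_inj] at hs
    rw [List.isChain_cons_cons] at h
    rw [List.getLast?_cons_cons] at ht
    exact hs ▸ .head h.1 (reflTransGen_of_isChain h.2 rfl ht)

lemma exists_nodup_isChain_of_reflTransGen {R : V → V → Prop} {s t : V}
    (h : Relation.ReflTransGen R s t) :
    ∃ l : List V, l.Nodup ∧ l.IsChain R ∧ l.head? = some s ∧ l.getLast? = some t := by
  induction h with
  | refl => exact ⟨[s], List.nodup_singleton s, List.isChain_singleton s, rfl, rfl⟩
  | @tail b c _ hbc ih =>
    obtain ⟨l, hnd, hch, hs, hb⟩ := ih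
    have hne : l ≠ [] := by rintro rfl; simp at hs
    by_cases hc : c ∈ l
    · obtain ⟨l₁, l₂, rfl⟩ := List.append_of_mem hc
      refine ⟨l₁ ++ [c], hnd.sublist (by simp), hch.prefix ⟨l₂, by simp⟩, ?_,
        List.getLast?_concat⟩
      cases l₁ <;> simpa using hs
    · refine ⟨l ++ [c], hnd.append (List.nodup_singleton c) (by simpa using hc), ?_,
        by rw [List.head?_append_of_ne_nil _ hne]; exact hs, List.getLast?_concat⟩
      exact hch.append (List.isChain_singleton c) fun x hx y hy => by
        simp_all

end Paths

section Flows

variable {V : Type*} [DecidableEq V]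

/-- `netOutflow f v` is the out-degree minus the in-degree of `v` in `f`. -/
def netOutflow (f : Finset (V × V)) : V → ℤ :=
  ∑ e ∈ f, (Pi.single e.1 1 - Pi.single e.2 1)

def outDegS (E : Finset (V × V)) (S : Finset V) : ℕ :=
  (E.filter (fun e => e.1 ∈ S ∧ e.2 ∉ S)).card

/-- A 0/1 flow, given by its set of saturated edges, of value `k` from `r` to `t`. -/
def IsFlow (f : Finset (V × V)) (r t : V) (k : ℕ) : Prop :=
  netOutflow f = k • (Pi.single r 1 - Pi.single t 1)

lemma netOutflow_union {A B : Finset (V × V)} (h : Disjoint A B) :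
    netOutflow (A ∪ B) = netOutflow A + netOutflow B :=
  Finset.sum_union h

lemma netOutflow_sdiff {A B : Finset (V × V)} (h : A ⊆ B) :
    netOutflow (B \ A) = netOutflow B - netOutflow A :=
  Finset.sum_sdiff_eq_sub h

lemma netOutflow_image_swap (A : Finset (V × V)) :
    netOutflow (A.image Prod.swap) = -netOutflow A := by
  rw [netOutflow, Finset.sum_image fun _ _ _ _ h => Prod.swap_injective h, netOutflow,
    ← Finset.sum_neg_distrib]
  simp

lemma sum_netOutflow (f : Finset (V × V)) (S : Finset V) :
    ∑ v ∈ S, netOutflow f v = (outDegS f S : ℤ) - inDegS f S := by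
  have hedge : ∀ e : V × V,
      ∑ v ∈ S, (Pi.single e.1 1 - Pi.single e.2 1 : V → ℤ) v =
        (if e.1 ∈ S ∧ e.2 ∉ S then 1 else 0) -
          (if e.1 ∉ S ∧ e.2 ∈ S then 1 else 0) := by
    intro e
    simp only [Pi.sub_apply, Finset.sum_sub_distrib, Finset.sum_pi_single']
    by_cases h1 : e.1 ∈ S <;> by_cases h2 : e.2 ∈ S <;> simp [h1, h2]
  simp only [netOutflow, Finset.sum_apply]
  rw [Finset.sum_comm, Finset.sum_congr rfl fun e _ => hedge e, Finset.sum_sub_distrib,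
    Finset.sum_boole, Finset.sum_boole, outDegS, inDegS]

lemma isFlow_empty (r t : V) : IsFlow (∅ : Finset (V × V)) r t 0 := by
  simp [IsFlow, netOutflow]

lemma IsRPathTo.isFlow {E : Finset (V × V)} {s t : V} {p : List V} (h : IsRPathTo E s t p) :
    IsFlow (pathEdges p).toFinset s t 1 := by
  rw [IsFlow, netOutflow, List.sum_toFinset _ (pathEdges_nodup h.1.1),
    sum_map_pathEdges_sub (fun v => (Pi.single v 1 : V → ℤ)) h.1.2.2 h.2, one_smul]

lemma IsFlow.sdiff {f g : Finset (V × V)} {r t : V} {k : ℕ} (hf : IsFlow f r t (k + 1))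
    (hg : IsFlow g r t 1) (hgf : g ⊆ f) : IsFlow (f \ g) r t k := by
  rw [IsFlow, netOutflow_sdiff hgf, hf, hg, succ_nsmul, one_smul, add_sub_cancel_right]

lemma IsFlow.outDegS_eq {f : Finset (V × V)} {r t : V} {k : ℕ} (hf : IsFlow f r t k)
    {S : Finset V} (hr : r ∈ S) (ht : t ∉ S) : (outDegS f S : ℤ) = inDegS f S + k := by
  have := sum_netOutflow f S
  rw [hf] at this
  simp only [Pi.smul_apply, Pi.sub_apply, ← Finset.smul_sum, Finset.sum_sub_distrib,
    Finset.sum_pi_single', if_pos hr, if_neg ht, sub_zero, nsmul_one] at this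
  linarith

end Flows

section Menger

variable {V : Type*}

lemma IsRPathTo.reflTransGen {E : Finset (V × V)} {s t : V} {p : List V}
    (h : IsRPathTo E s t p) : Relation.ReflTransGen (fun u v => (u, v) ∈ E) s t :=
  reflTransGen_of_isChain h.1.2.1 h.1.2.2 h.2

lemma exists_isRPathTo_iff {E : Finset (V × V)} {s t : V} :
    (∃ p, IsRPathTo E s t p) ↔ Relation.ReflTransGen (fun u v => (u, v) ∈ E) s t := by
  refine ⟨fun ⟨_, hp⟩ => hp.reflTransGen, fun h => ?_⟩
  obtain ⟨l, hnd, hch, hs, ht⟩ := exists_nodup_isChain_of_reflTransGen h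
  exact ⟨l, ⟨hnd, hch, hs⟩, ht⟩

lemma mem_of_reflTransGen {E : Finset (V × V)} {S : Finset V}
    (hS : ∀ e ∈ E, e.1 ∈ S → e.2 ∈ S) {s t : V}
    (h : Relation.ReflTransGen (fun u v => (u, v) ∈ E) s t) (hs : s ∈ S) : t ∈ S := by
  induction h with
  | refl => exact hs
  | tail _ he ih => exact hS _ he ih

lemma HasKPaths.mono {E E' : Finset (V × V)} {s t : V} {k : ℕ} (hE : E ⊆ E')
    (h : HasKPaths E s t k) : HasKPaths E' s t k :=
  let ⟨P, hP, hdisj⟩ := h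
  ⟨P, fun i => (hP i).mono hE, hdisj⟩

section Reachable

variable [Fintype V]

noncomputable def reachableFrom (E : Finset (V × V)) (r : V) : Finset V :=
  Finset.univ.filter (Relation.ReflTransGen (fun u v => (u, v) ∈ E) r)

lemma mem_reachableFrom {E : Finset (V × V)} {r v : V} :
    v ∈ reachableFrom E r ↔ Relation.ReflTransGen (fun u v => (u, v) ∈ E) r v := by
  simp [reachableFrom]

lemma self_mem_reachableFrom (E : Finset (V × V)) (r : V) : r ∈ reachableFrom E r :=
  mem_reachableFrom.2 .refl

lemma mem_reachableFrom_of_mem {E : Finset (V × V)} {r : V} {e : V × V} (he : e ∈ E)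
    (h : e.1 ∈ reachableFrom E r) : e.2 ∈ reachableFrom E r :=
  mem_reachableFrom.2 ((mem_reachableFrom.1 h).tail he)

end Reachable

variable [DecidableEq V]

lemma HasKPaths.cons {E : Finset (V × V)} {s t : V} {k : ℕ} {p : List V}
    (hp : IsRPathTo E s t p) (h : HasKPaths (E \ (pathEdges p).toFinset) s t k) :
    HasKPaths E s t (k + 1) := by
  obtain ⟨P, hP, hdisj⟩ := h
  have hfresh : ∀ i, ∀ e ∈ pathEdges (P i), e ∉ pathEdges p := fun i e he hep =>
    (Finset.mem_sdiff.1 ((hP i).pathEdges_subset (List.mem_toFinset.2 he))).2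
      (List.mem_toFinset.2 hep)
  refine ⟨Fin.cons p P, Fin.cases hp fun i => (hP i).mono Finset.sdiff_subset, ?_⟩
  intro i j hij e
  induction i using Fin.cases <;> induction j using Fin.cases
  · exact absurd rfl hij
  · exact fun he hej => hfresh _ e hej he
  · exact hfresh _ e
  · exact hdisj _ _ (fun h => hij (congrArg _ h)) e

def residualEdges (H f : Finset (V × V)) : Finset (V × V) :=
  (H \ f) ∪ f.image Prod.swap

lemma IsFlow.augment {H f : Finset (V × V)} {r t : V} {k : ℕ} {p : List V} (hfH : f ⊆ H)
    (hf : IsFlow f r t k) (hp : IsRPathTo (residualEdges H f) r t p) :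
    ∃ g ⊆ H, IsFlow g r t (k + 1) := by
  set A := (pathEdges p).toFinset
  set fwd := A.filter (· ∈ H \ f)
  set bwd := (A.filter (· ∉ H \ f)).image Prod.swap
  have hbwd : bwd ⊆ f := by
    intro e he
    obtain ⟨e', he', rfl⟩ := Finset.mem_image.1 he
    obtain ⟨heA, hne⟩ := Finset.mem_filter.1 he'
    obtain ⟨e'', he'', rfl⟩ := Finset.mem_image.1 <|
      (Finset.mem_union.1 (hp.pathEdges_subset heA)).resolve_left hne
    simpa using he''
  have hfwd : Disjoint f fwd := Finset.disjoint_right.2 fun e he =>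
    (Finset.mem_sdiff.1 (Finset.mem_filter.1 he).2).2
  refine ⟨(f ∪ fwd) \ bwd, Finset.sdiff_subset.trans <| Finset.union_subset hfH
    fun e he => (Finset.mem_sdiff.1 (Finset.mem_filter.1 he).2).1, ?_⟩
  have hA : netOutflow fwd + netOutflow (A.filter (· ∉ H \ f)) = netOutflow A :=
    Finset.sum_filter_add_sum_filter_not _ _ _
  rw [IsFlow, netOutflow_sdiff (hbwd.trans Finset.subset_union_left), netOutflow_union hfwd,
    netOutflow_image_swap, sub_neg_eq_add, add_assoc, hA, hf, hp.isFlow, one_smul, succ_nsmul]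

variable [Fintype V]

lemma IsFlow.exists_isRPathTo {f : Finset (V × V)} {r t : V} {k : ℕ}
    (hf : IsFlow f r t (k + 1)) : ∃ p, IsRPathTo f r t p := by
  refine exists_isRPathTo_iff.2 (mem_reachableFrom.1 ?_)
  by_contra ht
  have hout : outDegS f (reachableFrom f r) = 0 :=
    Finset.card_eq_zero.2 <| Finset.filter_eq_empty_iff.2 fun e he h =>
      h.2 (mem_reachableFrom_of_mem he h.1)
  have := hf.outDegS_eq (self_mem_reachableFrom f r) ht
  omega

lemma IsFlow.hasKPaths {r t : V} :
    ∀ {k : ℕ} {f : Finset (V × V)}, IsFlow f r t k → HasKPaths f r t k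
  | 0, _, _ => ⟨Fin.elim0, fun i => i.elim0, fun i => i.elim0⟩
  | _ + 1, _, hf =>
    let ⟨_, hp⟩ := hf.exists_isRPathTo
    HasKPaths.cons hp (hf.sdiff hp.isFlow hp.pathEdges_subset).hasKPaths

lemma IsFlow.exists_cut {H f : Finset (V × V)} {r t : V} {k : ℕ} (hfH : f ⊆ H)
    (hf : IsFlow f r t k) (ht : t ∉ reachableFrom (residualEdges H f) r) :
    ∃ C ⊆ H, C.card = k ∧ ∀ p, ¬IsRPathTo (H \ C) r t p := by
  set S := reachableFrom (residualEdges H f) r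
  set C := H.filter fun e => e.1 ∈ S ∧ e.2 ∉ S
  have hCf : C ⊆ f := fun e he => by
    obtain ⟨heH, hS, hS'⟩ := Finset.mem_filter.1 he
    by_contra hef
    exact hS' (mem_reachableFrom_of_mem (by simp [residualEdges, heH, hef]) hS)
  have hin : inDegS f S = 0 :=
    Finset.card_eq_zero.2 <| Finset.filter_eq_empty_iff.2 fun e he h =>
      h.1 (mem_reachableFrom_of_mem (e := e.swap) (by simp [residualEdges, he]) h.2)
  have hout : outDegS f S = C.card := by
    rw [outDegS]
    congr 1
    ext e
    simp only [C, Finset.mem_filter]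
    exact ⟨fun h => ⟨hfH h.1, h.2⟩, fun h => ⟨hCf (Finset.mem_filter.2 h), h.2⟩⟩
  refine ⟨C, Finset.filter_subset _ _, ?_, fun p hp => ht ?_⟩
  · have := hf.outDegS_eq (S := S) (self_mem_reachableFrom _ r) ht
    omega
  · refine mem_of_reflTransGen (fun e he hS => ?_) hp.reflTransGen (self_mem_reachableFrom _ r)
    by_contra hS'
    exact (Finset.mem_sdiff.1 he).2 (Finset.mem_filter.2 ⟨(Finset.mem_sdiff.1 he).1, hS, hS'⟩)

lemma exists_isFlow_of_forall_card_lt {H : Finset (V × V)} {r t : V} :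
    ∀ k : ℕ, (∀ F ⊆ H, F.card < k → ∃ p, IsRPathTo (H \ F) r t p) →
      ∃ f ⊆ H, IsFlow f r t k
  | 0, _ => ⟨∅, Finset.empty_subset H, isFlow_empty r t⟩
  | k + 1, h => by
    obtain ⟨f, hfH, hf⟩ := exists_isFlow_of_forall_card_lt k fun F hF hk => h F hF (by omega)
    by_cases ht : t ∈ reachableFrom (residualEdges H f) r
    · obtain ⟨p, hp⟩ := exists_isRPathTo_iff.2 (mem_reachableFrom.1 ht)
      exact hf.augment hfH hp
    · obtain ⟨C, hCH, hC, hno⟩ := hf.exists_cut hfH ht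
      obtain ⟨p, hp⟩ := h C hCH (by omega)
      exact (hno p hp).elim

/-- Menger's theorem, directed edge version. -/
theorem hasKPaths_of_forall_card_lt {H : Finset (V × V)} {r t : V} {k : ℕ}
    (h : ∀ F ⊆ H, F.card < k → ∃ p, IsRPathTo (H \ F) r t p) : HasKPaths H r t k :=
  let ⟨_, hfH, hf⟩ := exists_isFlow_of_forall_card_lt k h
  hf.hasKPaths.mono hfH

end Menger

section Sampling

open ProbabilityTheory

variable {Ω : Type*} [MeasurableSpace Ω] {μ : Measure Ω}

lemma measure_biUnion_le_card_mul {ι : Type*} (s : Finset ι) (A : ι → Set Ω) {x : ℝ}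
    (h : ∀ i ∈ s, μ (A i) ≤ ENNReal.ofReal x) :
    μ (⋃ i ∈ s, A i) ≤ ENNReal.ofReal (s.card * x) :=
  calc μ (⋃ i ∈ s, A i) ≤ ∑ i ∈ s, μ (A i) := measure_biUnion_finset_le s A
    _ ≤ s.card • ENNReal.ofReal x := Finset.sum_le_card_nsmul _ _ _ h
    _ = _ := by rw [nsmul_eq_mul, ENNReal.ofReal_mul (Nat.cast_nonneg _), ENNReal.ofReal_natCast]

lemma measure_iInter_preimage_compl_le [IsProbabilityMeasure μ] {ι β : Type*} [Fintype ι]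
    [mβ : MeasurableSpace β] {Z : ι → Ω → β} (hZ : ∀ i, Measurable (Z i))
    (hindep : iIndepFun Z μ)
    {B : Set β} (hB : MeasurableSet B) {q : ℝ} (hq0 : 0 ≤ q) (hq1 : q ≤ 1)
    (hq : ∀ i, ENNReal.ofReal q ≤ μ (Z i ⁻¹' B)) :
    μ (⋂ i, Z i ⁻¹' Bᶜ) ≤ ENNReal.ofReal ((1 - q) ^ Fintype.card ι) := by
  have hfail : ∀ i, μ (Z i ⁻¹' Bᶜ) ≤ ENNReal.ofReal (1 - q) := fun i => by
    rw [Set.preimage_compl, prob_compl_eq_one_sub (hZ i hB), ENNReal.ofReal_sub _ hq0,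
      ENNReal.ofReal_one]
    exact tsub_le_tsub_left (hq i) 1
  calc μ (⋂ i, Z i ⁻¹' Bᶜ) = ∏ i, μ (Z i ⁻¹' Bᶜ) := by
        simpa using hindep.measure_inter_preimage_eq_mul Finset.univ fun i _ => hB.compl
    _ ≤ ∏ _i : ι, ENNReal.ofReal (1 - q) := Finset.prod_le_prod' fun i _ => hfail i
    _ = _ := by rw [Finset.prod_const, Finset.card_univ, ENNReal.ofReal_pow (by linarith)]

end Sampling

lemma one_sub_pow_le_inv_pow {q : ℝ} {k n N : ℕ} (hq0 : 0 < q) (hq1 : q ≤ 1) (hn : 0 < n)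
    (hN : 2 * k * Real.log n / q ≤ N) : (1 - q) ^ N ≤ ((n : ℝ) ^ (2 * k))⁻¹ := by
  have hqN : 2 * k * Real.log n ≤ q * N := by rw [div_le_iff₀ hq0] at hN; linarith
  calc (1 - q) ^ N ≤ Real.exp (-q) ^ N :=
        pow_le_pow_left₀ (by linarith) (Real.one_sub_le_exp_neg q) N
    _ = Real.exp (-(q * N)) := by rw [← Real.exp_nat_mul]; ring_nf
    _ ≤ Real.exp (-Real.log ((n : ℝ) ^ (2 * k))) := by
        rw [Real.log_pow]; push_cast; exact Real.exp_le_exp.2 (by linarith)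
    _ = ((n : ℝ) ^ (2 * k))⁻¹ := by rw [Real.exp_neg, Real.exp_log (by positivity)]

lemma mul_one_sub_pow_le_inv {q : ℝ} {c k n N : ℕ} (hq0 : 0 < q) (hq1 : q ≤ 1) (hk : 1 ≤ k)
    (hc : c ≤ n ^ (2 * k - 1)) (hN : 2 * k * Real.log n / q ≤ N) :
    c * (1 - q) ^ N ≤ 1 / (n : ℝ) := by
  rcases n.eq_zero_or_pos with rfl | hn
  · simp [Nat.le_zero.1 (hc.trans_eq (zero_pow (by omega)))]
  have h2k : (n : ℝ) ^ (2 * k) = n ^ (2 * k - 1) * n := by rw [← pow_succ]; congr 1; omega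
  calc c * (1 - q) ^ N ≤ (n : ℝ) ^ (2 * k - 1) * ((n : ℝ) ^ (2 * k))⁻¹ :=
        mul_le_mul (by exact_mod_cast hc) (one_sub_pow_le_inv_pow hq0 hq1 hn hN)
          (pow_nonneg (by linarith) N) (by positivity)
    _ = 1 / n := by rw [h2k]; field_simp

lemma choose_min_mul_le {a b k n : ℕ} (hk : 1 ≤ k) (hb : b ≤ n)
    (hab : a ^ (k - 1) * b ≤ n ^ (2 * k - 1)) :
    a.choose (min (k - 1) a) * b ≤ n ^ (2 * k - 1) := by
  rcases a.eq_zero_or_pos with rfl | ha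
  · simpa using hb.trans (Nat.le_self_pow (by omega) n)
  calc a.choose (min (k - 1) a) * b ≤ a ^ (k - 1) * b := by
        gcongr
        exact (Nat.choose_le_pow _ _).trans (Nat.pow_le_pow_right ha (min_le_left _ _))
    _ ≤ _ := hab

section Amplification

open ProbabilityTheory

variable {V Ω : Type*} [DecidableEq V] [MeasurableSpace Ω] {μ : Measure Ω}
  [IsProbabilityMeasure μ] {r : V} {n N : ℕ} {q : ℝ} {Z : Fin N → Ω → Finset (V × V)}

lemma measure_not_exists_path_biUnion_le (hq0 : 0 < q) (hq1 : q ≤ 1)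
    (hmeas : ∀ i, @Measurable Ω (Finset (V × V)) _ ⊤ (Z i))
    (hindep : iIndepFun (m := fun _ : Fin N => (⊤ : MeasurableSpace (Finset (V × V)))) Z μ)
    {F : Finset (V × V)} {t : V}
    (hgood : ∀ i, ENNReal.ofReal q ≤ μ {ω | ∃ p, IsRPathTo (Z i ω \ F) r t p}) :
    μ {ω | ¬∃ p, IsRPathTo ((Finset.univ.biUnion fun i => Z i ω) \ F) r t p} ≤
      ENNReal.ofReal ((1 - q) ^ N) := by
  calc _ ≤ μ (⋂ i, Z i ⁻¹' {A | ∃ p, IsRPathTo (A \ F) r t p}ᶜ) :=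
        measure_mono fun ω (hω : ¬∃ p, _) => Set.mem_iInter.2 fun i ⟨p, hp⟩ =>
          hω ⟨p, hp.mono <| Finset.sdiff_subset_sdiff
            (Finset.subset_biUnion_of_mem _ (Finset.mem_univ i)) le_rfl⟩
    _ ≤ _ := by
        simpa using measure_iInter_preimage_compl_le (mβ := ⊤)
          (B := {A | ∃ p, IsRPathTo (A \ F) r t p}) hmeas hindep
          MeasurableSpace.measurableSet_top hq0.le hq1 hgood

theorem le_measure_forall_exists_path_biUnion {E : Finset (V × V)} {T : Finset V} {k : ℕ}
    (hq0 : 0 < q) (hq1 : q ≤ 1)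
    (hmeas : ∀ i, @Measurable Ω (Finset (V × V)) _ ⊤ (Z i))
    (hindep : iIndepFun (m := fun _ : Fin N => (⊤ : MeasurableSpace (Finset (V × V)))) Z μ)
    (hgood : ∀ (i : Fin N), ∀ F ⊆ E, (F.card : ℤ) ≤ (k : ℤ) - 1 → ∀ t ∈ T,
      ENNReal.ofReal q ≤ μ {ω | ∃ p, IsRPathTo (Z i ω \ F) r t p})
    (hN : 2 * k * Real.log n / q ≤ (N : ℝ)) (hnT : T.card ≤ n)
    (hcount : (E.card : ℝ) ^ (k - 1) * T.card ≤ (n : ℝ) ^ (2 * k - 1)) :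
    ENNReal.ofReal (1 - 1 / (n : ℝ)) ≤ μ {ω | ∀ t ∈ T, ∀ F ⊆ E, F.card < k →
      ∃ p, IsRPathTo ((Finset.univ.biUnion fun i => Z i ω) \ F) r t p} := by
  set R := {ω | ∀ t ∈ T, ∀ F ⊆ E, F.card < k →
      ∃ p, IsRPathTo ((Finset.univ.biUnion fun i => Z i ω) \ F) r t p}
  rcases k.eq_zero_or_pos with rfl | hk
  · have hR : R = Set.univ :=
      Set.eq_univ_of_forall fun ω t _ F _ hF => absurd hF (Nat.not_lt_zero _)
    rw [hR, measure_univ]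
    exact ENNReal.ofReal_le_one.2 (sub_le_self _ (by positivity))
  -- every edge set of size below `k` in `E` extends to one of size `m`
  set m := min (k - 1) E.card
  have hcover : Rᶜ ⊆ ⋃ x ∈ E.powersetCard m ×ˢ T,
      {ω | ¬∃ p, IsRPathTo ((Finset.univ.biUnion fun i => Z i ω) \ x.1) r x.2 p} := by
    intro ω hω
    simp only [R, Set.mem_compl_iff, Set.mem_ofPred_eq, not_forall] at hω
    obtain ⟨t, ht, F, hFE, hFk, hno⟩ := hω
    obtain ⟨F', hFF', hF'E, hF'⟩ := Finset.exists_subsuperset_card_eq hFE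
      (le_min (by omega : F.card ≤ k - 1) (Finset.card_le_card hFE)) (min_le_right _ _)
    exact Set.mem_biUnion (x := (F', t))
      (Finset.mem_product.2 ⟨Finset.mem_powersetCard.2 ⟨hF'E, hF'⟩, ht⟩)
      fun ⟨p, hp⟩ => hno ⟨p, hp.mono (Finset.sdiff_subset_sdiff le_rfl hFF')⟩
  have hcard : (E.powersetCard m ×ˢ T).card ≤ n ^ (2 * k - 1) := by
    rw [Finset.card_product, Finset.card_powersetCard]
    exact choose_min_mul_le hk hnT (by exact_mod_cast hcount)
  have hsmall : μ Rᶜ ≤ ENNReal.ofReal (1 / n) := by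
    refine (measure_mono hcover).trans <| (measure_biUnion_le_card_mul _ _ fun x hx => ?_).trans
      (ENNReal.ofReal_le_ofReal (mul_one_sub_pow_le_inv hq0 hq1 hk hcard hN))
    obtain ⟨hF, ht⟩ := Finset.mem_product.1 hx
    obtain ⟨hFE, hFm⟩ := Finset.mem_powersetCard.1 hF
    exact measure_not_exists_path_biUnion_le hq0 hq1 hmeas hindep
      fun i => hgood i x.1 hFE (by omega) x.2 ht
  calc ENNReal.ofReal (1 - 1 / n) = 1 - ENNReal.ofReal (1 / n) := by
        rw [ENNReal.ofReal_sub _ (by positivity), ENNReal.ofReal_one]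
    _ ≤ 1 - μ Rᶜ := tsub_le_tsub_left hsmall 1
    _ ≤ μ R := by
        rw [tsub_le_iff_right, ← measure_univ (μ := μ)]
        exact measure_univ_le_add_compl R

end Amplification

theorem union_of_samples_is_k_connected_general
    {V : Type*} [Fintype V] [DecidableEq V]
    {Ω : Type*} [MeasurableSpace Ω] (μ : Measure Ω) [IsProbabilityMeasure μ]
    (E : Finset (V × V)) (r : V) (T : Finset V) (k n N : ℕ) (q : ℝ)
    (hq0 : 0 < q) (hq1 : q ≤ 1)
    (Z : Fin N → Ω → Finset (V × V))
    (hZE : ∀ i ω, Z i ω ⊆ E)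
    (hmeas : ∀ i, @Measurable Ω (Finset (V × V)) _ ⊤ (Z i))
    (hindep : ProbabilityTheory.iIndepFun (m := fun _ : Fin N => (⊤ : MeasurableSpace (Finset (V × V)))) Z μ)
    (hgood : ∀ (i : Fin N), ∀ F ⊆ E, (F.card : ℤ) ≤ (k : ℤ) - 1 → ∀ t ∈ T,
      ENNReal.ofReal q ≤ μ {ω | ∃ p, IsRPathTo (Z i ω \ F) r t p})
    (hN : 2 * k * Real.log n / q ≤ (N : ℝ))
    (hnT : T.card ≤ n)
    (hcount : (E.card : ℝ) ^ (k - 1) * T.card ≤ (n : ℝ) ^ (2 * k - 1)) :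
    ENNReal.ofReal (1 - 1 / (n : ℝ)) ≤
      μ {ω | ∀ t ∈ T,
        (∀ F ⊆ E, (F.card : ℤ) = (k : ℤ) - 1 →
          ∃ p, IsRPathTo ((Finset.univ.biUnion fun i => Z i ω) \ F) r t p) ∧
        HasKPaths (Finset.univ.biUnion fun i => Z i ω) r t k} := by
  refine (le_measure_forall_exists_path_biUnion hq0 hq1 hmeas hindep hgood hN hnT hcount).trans
    (measure_mono fun ω hω t ht => ?_)
  have hHE : (Finset.univ.biUnion fun i => Z i ω) ⊆ E :=
    Finset.biUnion_subset.2 fun i _ => hZE i ω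
  exact ⟨fun F hF hc => hω t ht F hF (by omega),
    hasKPaths_of_forall_card_lt fun F hF hc => hω t ht F (hF.trans hHE) hc⟩

/-- Amplification by independent sampling: if each independent random subgraph `Z i`
gives, for every edge set `F` of at most `k−1` edges and every terminal `t`, an `r→t`
path avoiding `F` with probability at least `q`, and `N ≥ 2k ln n / q` with
`n ≥ max(|E|², |T|)` and `|E|^(k−1)·|T| ≤ n^(2k−1)`, then with probability at least
`1 − 1/n` the union of the `Z i` contains, for every terminal `t` and every `F` of
`k−1` edges, an `r→t` path avoiding `F`; hence it has `k` edge-disjoint `r→t` paths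
for every terminal. -/
theorem union_of_samples_is_k_connected
    {V : Type*} [Fintype V] [DecidableEq V]
    {Ω : Type*} [MeasurableSpace Ω] (μ : Measure Ω) [IsProbabilityMeasure μ]
    (E : Finset (V × V)) (r : V) (T : Finset V) (k n N : ℕ) (q : ℝ)
    (hq0 : 0 < q) (hq1 : q ≤ 1)
    (Z : Fin N → Ω → Finset (V × V))
    (hZE : ∀ i ω, Z i ω ⊆ E)
    (hmeas : ∀ i, @Measurable Ω (Finset (V × V)) _ ⊤ (Z i))
    (hindep : ProbabilityTheory.iIndepFun (m := fun _ : Fin N => (⊤ : MeasurableSpace (Finset (V × V)))) Z μ)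
    (hgood : ∀ (i : Fin N), ∀ F ⊆ E, (F.card : ℤ) ≤ (k : ℤ) - 1 → ∀ t ∈ T,
      ENNReal.ofReal q ≤ μ {ω | ∃ p, IsRPathTo (Z i ω \ F) r t p})
    (hN : 2 * k * Real.log n / q ≤ (N : ℝ))
    (hnE : E.card ^ 2 ≤ n) (hnT : T.card ≤ n)
    (hcount : (E.card : ℝ) ^ (k - 1) * T.card ≤ (n : ℝ) ^ (2 * k - 1)) :
    ENNReal.ofReal (1 - 1 / (n : ℝ)) ≤
      μ {ω | ∀ t ∈ T,
        (∀ F ⊆ E, (F.card : ℤ) = (k : ℤ) - 1 →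
          ∃ p, IsRPathTo ((Finset.univ.biUnion fun i => Z i ω) \ F) r t p) ∧
        HasKPaths (Finset.univ.biUnion fun i => Z i ω) r t k} :=
  union_of_samples_is_k_connected_general μ E r T k n N q hq0 hq1 Z hZE hmeas hindep hgood hN hnT
    hcount
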